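/- Let T ∈ B_{A^{1/2}}(H) satisfy TA^{1/2} = A^{1/2}T. Then r_A(T) = sup{|λ| : λ ∈ σ_A(T)}. -/

import Mathlib

variable {H : Type*} [NormedAddCommGroup H] [InnerProductSpace ℂ H] [CompleteSpace H]

/-- The semi-norm `‖x‖_A = ⟨Ax, x⟩^{1/2}` induced by a positive operator `A`. -/
noncomputable def anorm (A : H →L[ℂ] H) (x : H) : ℝ :=
  Real.sqrt (RCLike.re (inner ℂ (A x) x : ℂ))

/-- Membership in `B_{A^{1/2}}(H)`: there is `c > 0` with `‖Tx‖_A ≤ c ‖x‖_A` for all `x`. -/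
def MemBA (A T : H →L[ℂ] H) : Prop :=
  ∃ c > 0, ∀ x : H, anorm A (T x) ≤ c * anorm A x

/-- The `A`-operator seminorm `‖T‖_A`: the least `c ≥ 0` with `‖Tx‖_A ≤ c ‖x‖_A` for all `x`. -/
noncomputable def opANorm (A T : H →L[ℂ] H) : ℝ :=
  sInf {c : ℝ | 0 ≤ c ∧ ∀ x : H, anorm A (T x) ≤ c * anorm A x}

/-- `T` is `A`-invertible in `B_{A^{1/2}}(H)`. -/
def AInv (A T : H →L[ℂ] H) : Prop :=
  T ≠ 0 ∧ ∃ S : H →L[ℂ] H, S ≠ 0 ∧ MemBA A S ∧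
    A.comp (T.comp S) = A ∧ A.comp (S.comp T) = A

/-- The `A`-resolvent set `ρ_A(T)`. -/
def rhoA (A T : H →L[ℂ] H) : Set ℂ :=
  {lam : ℂ | AInv A (lam • (1 : H →L[ℂ] H) - T)}

/-- The `A`-spectrum `σ_A(T)`. -/
def sigmaA (A T : H →L[ℂ] H) : Set ℂ := (rhoA A T)ᶜ

/-- The `A`-spectral radius `r_A(T) = inf_{n ≥ 1} ‖T^n‖_A^{1/n}`. -/
noncomputable def rA (A T : H →L[ℂ] H) : ℝ :=
  ⨅ n : ℕ+, (opANorm A (T ^ (n : ℕ))) ^ ((((n : ℕ) : ℝ))⁻¹)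

/-- `sup {|λ| : λ ∈ σ_A(T)}`. -/
noncomputable def supSpecA (A T : H →L[ℂ] H) : ℝ :=
  sSup ((fun z : ℂ => ‖z‖) '' sigmaA A T)

/-- `S` is the `A^{1/2}`-adjoint `T^⋄` of `T`. -/
def IsDiamond (sqrtA T S : H →L[ℂ] H) : Prop :=
  sqrtA.comp S = (ContinuousLinearMap.adjoint T).comp sqrtA ∧
    Set.range (⇑S) ⊆ closure (Set.range (⇑sqrtA))

/-- The orthogonal projection of `H` onto the closure of the range of `A`. -/
noncomputable def projA (A : H →L[ℂ] H) : H →L[ℂ] H :=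
  haveI : CompleteSpace ((LinearMap.range (A : H →ₗ[ℂ] H)).topologicalClosure : Submodule ℂ H) :=
    (Submodule.isClosed_topologicalClosure _).completeSpace_coe
  ((LinearMap.range (A : H →ₗ[ℂ] H)).topologicalClosure.subtypeL).comp
    ((LinearMap.range (A : H →ₗ[ℂ] H)).topologicalClosure.orthogonalProjectionOnto)

/-!
Write `A = B ∘ B` with `B = A^{1/2}` self-adjoint, so that `‖x‖_A = ‖B x‖`. An operator `U`
commuting with `B` leaves `M = closure (range B)` invariant, and `x ↦ B x` maps `H` onto a dense
subspace of `M` intertwining `U` with its restriction `U|_M`. Hence `‖U‖_A = ‖U|_M‖`, and `U` is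
`A`-invertible exactly when `U|_M` is invertible on the Hilbert space `M` (an `A`-inverse gives a
lower bound on a dense set; conversely an inverse on `M` is lifted to `H` through the orthogonal
projection onto `M`). So `r_A(T)` and `σ_A(T)` are the spectral radius and spectrum of `T|_M` in the
Banach algebra of operators on `M`, and Gelfand's formula concludes.
-/

set_option linter.unusedSectionVars false

open ContinuousLinearMap
open scoped ENNReal

section Banach

variable {𝕜 E : Type*} [NontriviallyNormedField 𝕜] [NormedAddCommGroup E] [NormedSpace 𝕜 E]

lemma opNorm_le_iff_of_denseRange {X : Type*} {J : X → E} (hJ : DenseRange J) (V : E →L[𝕜] E)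
    {c : ℝ} (hc : 0 ≤ c) : ‖V‖ ≤ c ↔ ∀ x, ‖V (J x)‖ ≤ c * ‖J x‖ := by
  refine ⟨fun h x => V.le_of_opNorm_le h (J x), fun h => V.opNorm_le_bound hc fun y => ?_⟩
  refine hJ.induction_on y ?_ h
  exact isClosed_le (by fun_prop) (by fun_prop)

lemma isUnit_of_dense_subset_range {D : E →L[𝕜] E} [CompleteSpace E] {s : Set E}
    (hs : Dense s) (hsD : s ⊆ Set.range D) {c : ℝ} (hc : ∀ y ∈ s, ‖y‖ ≤ c * ‖D y‖) :
    IsUnit D := by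
  have hbound : ∀ y, ‖y‖ ≤ c.toNNReal * ‖D y‖ := by
    refine hs.induction (fun y hy => (hc y hy).trans ?_) (isClosed_le (by fun_prop) (by fun_prop))
    gcongr
    exact Real.le_coe_toNNReal c
  have hD := D.antilipschitz_of_bound hbound
  have hrange : closure s ⊆ Set.range D :=
    closure_minimal hsD (hD.isClosed_range D.uniformContinuous)
  rw [hs.closure_eq, Set.univ_subset_iff, Set.range_eq_univ] at hrange
  exact isUnit_iff_bijective.mpr ⟨hD.injective, hrange⟩

end Banach

section RangeClosure

variable {B : H →L[ℂ] H}

lemma anorm_comp_self (hB : IsSelfAdjoint B) (x : H) : anorm (B.comp B) x = ‖B x‖ := by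
  have h : inner ℂ (B (B x)) x = inner ℂ (B x) (B x) := hB.isSymmetric (B x) x
  rw [anorm, comp_apply, h, inner_self_eq_norm_sq, Real.sqrt_sq (norm_nonneg _)]

variable (B) in
abbrev rangeClosure : Submodule ℂ H := B.range.topologicalClosure

variable (B) in
noncomputable def toRangeClosure : H →L[ℂ] rangeClosure B :=
  B.codRestrict _ fun x => B.range.le_topologicalClosure ⟨x, rfl⟩

@[simp]
lemma coe_toRangeClosure (x : H) : (toRangeClosure B x : H) = B x := rfl

lemma denseRange_toRangeClosure : DenseRange (toRangeClosure B) := by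
  rw [DenseRange, Subtype.dense_iff, ← Set.range_comp]
  exact subset_rfl

lemma comp_self_comp_eq_comp_self_iff (hB : IsSelfAdjoint B) {X : H →L[ℂ] H} :
    (B.comp B).comp X = B.comp B ↔ (toRangeClosure B).comp X = toRangeClosure B := by
  constructor
  · intro h
    ext x
    have h0 : anorm (B.comp B) (X x - x) = 0 := by
      simp [anorm, ← comp_apply, h]
    rw [anorm_comp_self hB, norm_eq_zero, map_sub, sub_eq_zero] at h0
    simpa using h0
  · intro h
    ext x
    simpa using congrArg (fun f => B (f x : H)) h

lemma orthogonal_rangeClosure (hB : IsSelfAdjoint B) : (rangeClosure B)ᗮ = B.ker := by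
  rw [Submodule.orthogonal_closure, orthogonal_range, hB.adjoint_eq]

lemma apply_starProjection_rangeClosure (hB : IsSelfAdjoint B) (x : H) :
    B ((rangeClosure B).starProjection x) = B x := by
  have h := Submodule.sub_starProjection_mem_orthogonal (K := rangeClosure B) x
  rw [orthogonal_rangeClosure hB, LinearMap.mem_ker, map_sub, sub_eq_zero] at h
  exact h.symm

lemma nontrivial_rangeClosure (hB0 : B ≠ 0) : Nontrivial (rangeClosure B) := by
  obtain ⟨x, hx⟩ : ∃ x, B x ≠ 0 := by
    by_contra! h
    exact hB0 (ext h)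
  exact ⟨toRangeClosure B x, 0, fun h => hx (by simpa using congrArg Subtype.val h)⟩

lemma mapsTo_rangeClosure {U : H →L[ℂ] H} (hU : Commute U B) :
    ∀ x ∈ rangeClosure B, U x ∈ rangeClosure B := by
  intro x hx
  refine map_mem_closure U.continuous hx ?_
  rintro _ ⟨y, rfl⟩
  exact ⟨U y, (DFunLike.congr_fun hU.eq y).symm⟩

noncomputable def restrictRangeClosure (U : H →L[ℂ] H) (hU : Commute U B) :
    rangeClosure B →L[ℂ] rangeClosure B :=
  U.restrict (mapsTo_rangeClosure hU)

@[simp]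
lemma coe_restrictRangeClosure_apply {U : H →L[ℂ] H} (hU : Commute U B) (m : rangeClosure B) :
    (restrictRangeClosure U hU m : H) = U m := rfl

lemma restrictRangeClosure_comp_toRangeClosure {U : H →L[ℂ] H} (hU : Commute U B) :
    (restrictRangeClosure U hU).comp (toRangeClosure B) = (toRangeClosure B).comp U := by
  ext x
  exact DFunLike.congr_fun hU.eq x

lemma restrictRangeClosure_pow {U : H →L[ℂ] H} (hU : Commute U B) (n : ℕ) :
    restrictRangeClosure (U ^ n) (hU.pow_left n) = restrictRangeClosure U hU ^ n := by
  induction n with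
  | zero => ext; simp
  | succ n ih =>
    rw [pow_succ (restrictRangeClosure U hU), ← ih]
    ext
    simp [pow_succ]

lemma restrictRangeClosure_smul_one_sub {U : H →L[ℂ] H} (hU : Commute U B) (z : ℂ) :
    restrictRangeClosure (z • 1 - U) (((Commute.one_left B).smul_left z).sub_left hU) =
      z • 1 - restrictRangeClosure U hU := by
  ext
  simp

lemma opANorm_comp_self (hB : IsSelfAdjoint B) {U : H →L[ℂ] H} (hU : Commute U B) :
    opANorm (B.comp B) U = ‖restrictRangeClosure U hU‖ := by
  have hJ (x : H) : ‖B (U x)‖ = ‖restrictRangeClosure U hU (toRangeClosure B x)‖ :=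
    congrArg norm (DFunLike.congr_fun hU.eq x).symm
  have hset : {c : ℝ | 0 ≤ c ∧ ∀ x, anorm (B.comp B) (U x) ≤ c * anorm (B.comp B) x} =
      Set.Ici ‖restrictRangeClosure U hU‖ := by
    ext c
    simp only [Set.mem_ofPred_eq, Set.mem_Ici, anorm_comp_self hB, hJ]
    constructor
    · rintro ⟨hc, h⟩
      exact (opNorm_le_iff_of_denseRange denseRange_toRangeClosure _ hc).mpr h
    · intro h
      have hc := (norm_nonneg (restrictRangeClosure U hU)).trans h
      exact ⟨hc, (opNorm_le_iff_of_denseRange denseRange_toRangeClosure _ hc).mp h⟩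
  rw [opANorm, hset, csInf_Ici]

lemma isUnit_restrictRangeClosure_of_aInv (hB : IsSelfAdjoint B) {U : H →L[ℂ] H}
    (hU : Commute U B) (h : AInv (B.comp B) U) : IsUnit (restrictRangeClosure U hU) := by
  obtain ⟨-, S, -, ⟨c, -, hc⟩, hUS, hSU⟩ := h
  rw [comp_self_comp_eq_comp_self_iff hB] at hUS hSU
  set J := toRangeClosure B
  have hJU (x : H) : restrictRangeClosure U hU (J x) = J (U x) :=
    DFunLike.congr_fun (restrictRangeClosure_comp_toRangeClosure hU) x
  refine isUnit_of_dense_subset_range denseRange_toRangeClosure (c := c) ?_ ?_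
  · rintro _ ⟨x, rfl⟩
    exact ⟨J (S x), (hJU _).trans (DFunLike.congr_fun hUS x)⟩
  · rintro _ ⟨x, rfl⟩
    calc ‖J x‖ = ‖B (S (U x))‖ := congrArg norm (DFunLike.congr_fun hSU x).symm
      _ ≤ c * ‖B (U x)‖ := by simpa only [anorm_comp_self hB] using hc (U x)
      _ = c * ‖restrictRangeClosure U hU (J x)‖ := by rw [hJU]; rfl

lemma exists_toRangeClosure_comp_eq (hB : IsSelfAdjoint B)
    {R : rangeClosure B →L[ℂ] rangeClosure B}
    (hR : Commute R (restrictRangeClosure B (Commute.refl B))) :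
    ∃ S : H →L[ℂ] H, (toRangeClosure B).comp S = R.comp (toRangeClosure B) := by
  set P := (rangeClosure B).orthogonalProjectionOnto
  refine ⟨(rangeClosure B).subtypeL.comp (R.comp P), ?_⟩
  have hP (x : H) : restrictRangeClosure B (Commute.refl B) (P x) = toRangeClosure B x :=
    Subtype.ext (apply_starProjection_rangeClosure hB x)
  refine ContinuousLinearMap.ext fun x => ?_
  calc toRangeClosure B (R (P x)) = restrictRangeClosure B (Commute.refl B) (R (P x)) := rfl
    _ = R (restrictRangeClosure B (Commute.refl B) (P x)) := DFunLike.congr_fun hR.eq.symm (P x)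
    _ = R (toRangeClosure B x) := by rw [hP]

lemma aInv_of_isUnit_restrictRangeClosure (hB : IsSelfAdjoint B) (hB0 : B ≠ 0) {U : H →L[ℂ] H}
    (hU : Commute U B) (h : IsUnit (restrictRangeClosure U hU)) : AInv (B.comp B) U := by
  have := nontrivial_rangeClosure hB0
  obtain ⟨u, hu⟩ := h
  have hUB : Commute (restrictRangeClosure U hU) (restrictRangeClosure B (Commute.refl B)) := by
    ext m
    exact DFunLike.congr_fun hU.eq (m : H)
  obtain ⟨S, hS⟩ := exists_toRangeClosure_comp_eq hB (hu ▸ hUB).units_inv_left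
  have hJU := restrictRangeClosure_comp_toRangeClosure hU
  rw [← hu] at hJU
  refine ⟨?_, S, ?_, ⟨‖(↑u⁻¹ : rangeClosure B →L[ℂ] rangeClosure B)‖ + 1, by positivity,
    fun x => ?_⟩, ?_, ?_⟩
  · rintro rfl
    have h0 : restrictRangeClosure (0 : H →L[ℂ] H) hU = 0 := rfl
    exact not_isUnit_zero (h0 ▸ hu ▸ u.isUnit)
  · rintro rfl
    have hJ : toRangeClosure B = 0 := by
      rw [← id_comp (toRangeClosure B), ← one_def, ← u.mul_inv, mul_def, comp_assoc, ← hS,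
        comp_zero, comp_zero]
    exact hB0 (ContinuousLinearMap.ext fun x => congrArg Subtype.val (DFunLike.congr_fun hJ x))
  · rw [anorm_comp_self hB, anorm_comp_self hB]
    calc ‖B (S x)‖ = ‖(↑u⁻¹ : rangeClosure B →L[ℂ] rangeClosure B) (toRangeClosure B x)‖ :=
          congrArg (‖·‖) (congrArg Subtype.val (DFunLike.congr_fun hS x))
      _ ≤ ‖(↑u⁻¹ : rangeClosure B →L[ℂ] rangeClosure B)‖ * ‖B x‖ := le_opNorm _ _
      _ ≤ _ := by gcongr; linarith
  · rw [comp_self_comp_eq_comp_self_iff hB, ← comp_assoc, ← hJU, comp_assoc, hS, ← comp_assoc,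
      ← mul_def, u.mul_inv, one_def, id_comp]
  · rw [comp_self_comp_eq_comp_self_iff hB, ← comp_assoc, hS, comp_assoc, ← hJU, ← comp_assoc,
      ← mul_def, u.inv_mul, one_def, id_comp]

lemma aInv_comp_self_iff_isUnit (hB : IsSelfAdjoint B) (hB0 : B ≠ 0) {U : H →L[ℂ] H}
    (hU : Commute U B) : AInv (B.comp B) U ↔ IsUnit (restrictRangeClosure U hU) :=
  ⟨isUnit_restrictRangeClosure_of_aInv hB hU, aInv_of_isUnit_restrictRangeClosure hB hB0 hU⟩

end RangeClosure

section Gelfand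

variable {𝔄 : Type*} [NormedRing 𝔄] [NormedAlgebra ℂ 𝔄] [CompleteSpace 𝔄] [NormOneClass 𝔄]

lemma spectralRadius_ne_top (a : 𝔄) : spectralRadius ℂ a ≠ ∞ :=
  ne_top_of_le_ne_top ENNReal.coe_ne_top (spectrum.spectralRadius_le_nnnorm a)

lemma spectralRadius_toReal_le_norm_pow_rpow (a : 𝔄) {n : ℕ} (hn : n ≠ 0) :
    (spectralRadius ℂ a).toReal ≤ ‖a ^ n‖ ^ (n : ℝ)⁻¹ := by
  have hpow : (spectralRadius ℂ a) ^ n ≤ ‖a ^ n‖₊ :=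
    (spectrum.spectralRadius_pow_le a n hn).trans (spectrum.spectralRadius_le_nnnorm _)
  have := ENNReal.toReal_mono ENNReal.coe_ne_top hpow
  rw [ENNReal.toReal_pow, ENNReal.coe_toReal, coe_nnnorm] at this
  rw [Real.le_rpow_inv_iff_of_pos ENNReal.toReal_nonneg (norm_nonneg _) (by positivity)]
  exact_mod_cast this

lemma iInf_norm_pow_rpow_eq_spectralRadius (a : 𝔄) :
    ⨅ n : ℕ+, ‖a ^ (n : ℕ)‖ ^ ((n : ℕ) : ℝ)⁻¹ = (spectralRadius ℂ a).toReal := by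
  have hbdd : BddBelow (Set.range fun n : ℕ+ => ‖a ^ (n : ℕ)‖ ^ ((n : ℕ) : ℝ)⁻¹) :=
    ⟨0, by rintro _ ⟨n, rfl⟩; positivity⟩
  have hgelfand : Filter.Tendsto (fun n : ℕ => ‖a ^ n‖ ^ (n : ℝ)⁻¹) Filter.atTop
      (nhds (spectralRadius ℂ a).toReal) := by
    have := (ENNReal.tendsto_toReal (spectralRadius_ne_top a)).comp
      (spectrum.pow_nnnorm_pow_one_div_tendsto_nhds_spectralRadius a)
    simpa [Function.comp_def, ← ENNReal.toReal_rpow] using this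
  refine le_antisymm (ge_of_tendsto hgelfand ?_) (le_ciInf fun n =>
    spectralRadius_toReal_le_norm_pow_rpow a n.ne_zero)
  filter_upwards [Filter.eventually_ge_atTop 1] with n hn
  exact ciInf_le hbdd ⟨n, hn⟩

lemma sSup_norm_spectrum_eq_spectralRadius [Nontrivial 𝔄] (a : 𝔄) :
    sSup ((fun z : ℂ => ‖z‖) '' spectrum ℂ a) = (spectralRadius ℂ a).toReal := by
  have hle : ∀ z ∈ spectrum ℂ a, ‖z‖ ≤ (spectralRadius ℂ a).toReal := fun z hz =>
    (ENNReal.toReal_le_toReal ENNReal.coe_ne_top (spectralRadius_ne_top a)).mpr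
      (le_iSup₂ (f := fun k (_ : k ∈ spectrum ℂ a) => (‖k‖₊ : ℝ≥0∞)) z hz)
  obtain ⟨z, hz, hzr⟩ := spectrum.exists_nnnorm_eq_spectralRadius a
  refine le_antisymm (csSup_le (⟨_, z, hz, rfl⟩) (Set.forall_mem_image.mpr hle)) ?_
  refine le_csSup ⟨_, Set.forall_mem_image.mpr hle⟩ ⟨z, hz, ?_⟩
  simp [← hzr]

end Gelfand

theorem stmt7_general (A sqrtA T : H →L[ℂ] H) (hA0 : A ≠ 0)
    (hsqrt : sqrtA.IsPositive) (hsq : sqrtA.comp sqrtA = A)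
    (hcomm : T.comp sqrtA = sqrtA.comp T) :
    rA A T = supSpecA A T := by
  subst hsq
  have hB := hsqrt.isSelfAdjoint
  have hB0 : sqrtA ≠ 0 := by
    rintro rfl
    exact hA0 (zero_comp 0)
  have hT : Commute T sqrtA := hcomm
  have := nontrivial_rangeClosure hB0
  have hσ : sigmaA (sqrtA.comp sqrtA) T = spectrum ℂ (restrictRangeClosure T hT) := by
    ext z
    rw [sigmaA, rhoA, Set.mem_compl_iff, Set.mem_ofPred_eq, aInv_comp_self_iff_isUnit hB hB0
      (((Commute.one_left _).smul_left z).sub_left hT),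
      restrictRangeClosure_smul_one_sub, spectrum.mem_iff, Algebra.algebraMap_eq_smul_one]
  have hnorm (n : ℕ) : opANorm (sqrtA.comp sqrtA) (T ^ n) = ‖restrictRangeClosure T hT ^ n‖ := by
    rw [opANorm_comp_self hB (hT.pow_left n), restrictRangeClosure_pow]
  simp only [rA, supSpecA, hσ, hnorm]
  rw [iInf_norm_pow_rpow_eq_spectralRadius (restrictRangeClosure T hT),
    sSup_norm_spectrum_eq_spectralRadius (restrictRangeClosure T hT)]

theorem stmt7 (A sqrtA T : H →L[ℂ] H) (hA : A.IsPositive) (hA0 : A ≠ 0)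
    (hsqrt : sqrtA.IsPositive) (hsq : sqrtA.comp sqrtA = A)
    (hT : MemBA A T) (hcomm : T.comp sqrtA = sqrtA.comp T) :
    rA A T = supSpecA A T :=
  stmt7_general A sqrtA T hA0 hsqrt hsq hcomm
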